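/- Fix K ≥ 1 and positive reals N₁,…,N_K. For b = (b₁,…,b_K) ∈ (0,∞)^K define f_K(b) as the K-dimensional Lebesgue measure of the set { x ∈ (0,∞)^K : Σ_{l=1}^k N_l·log₂(1+x_l) < Σ_{l=1}^k b_l for every k ∈ {1,…,K} }. Then for each index r ∈ {1,…,K} and each fixed choice of positive values b_j (j ≠ r), the function b_r ↦ f_K(b₁,…,b_K) is finite, monotonically nondecreasing and convex on (0,∞). -/

import Mathlib

open MeasureTheory Real

/-- The high-SNR outage region of `K`-round VL-XP-HARQ:
`{x ∈ (0,∞)^K : Σ_{l=1}^k N_l log₂(1+x_l) < Σ_{l=1}^k b_l for every k}`. -/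
def outRegion {K : ℕ} (N b : Fin K → ℝ) : Set (Fin K → ℝ) :=
  {x | (∀ i, 0 < x i) ∧
    ∀ k : Fin K, ∑ l ∈ Finset.Iic k, N l * logb 2 (1 + x l)
      < ∑ l ∈ Finset.Iic k, b l}

/-- `f_K(b)`: the `K`-dimensional Lebesgue measure of the outage region. -/
noncomputable def fK {K : ℕ} (N b : Fin K → ℝ) : ℝ :=
  (volume (outRegion N b)).toReal

/-!
Finiteness: the region lies in the box `∏ᵢ {0 < xᵢ, Nᵢ log₂(1 + xᵢ) < b₁ + ⋯ + bᵢ}`, because every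
summand `N_l log₂(1 + x_l)` is nonnegative. Monotonicity: raising `b_r` relaxes every constraint.
Convexity: by Fubini in the coordinate `x_r`, the region is fibred over the other coordinates
`x'`, and each fibre is either empty or the interval `(0, 2^((b_r + c(x'))/N_r) - 1)`, where `c(x')`
is the smallest slack of the constraints `k ≥ r` once their `r`-th summands are removed. The fibre
length is convex in `b_r`, and an integral of convex functions is convex.
-/

open Function Set

theorem Finset.sum_update {ι M : Type*} [DecidableEq ι] [AddCommGroup M] (s : Finset ι)
    (f : ι → M) (i : ι) (a : M) :
    ∑ j ∈ s, update f i a j = ∑ j ∈ s, f j + if i ∈ s then a - f i else 0 := by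
  split_ifs with hi
  · rw [← add_sum_erase s _ hi, ← add_sum_erase s _ hi, update_self,
      sum_congr rfl fun j hj => update_of_ne (ne_of_mem_erase hj) a f]
    abel
  · rw [sum_update_of_notMem hi, add_zero]

theorem convexOn_rpow_left_div {a : ℝ} (ha : 0 < a) (c : ℝ) :
    ConvexOn ℝ univ fun t : ℝ => a ^ (t / c) := by
  simpa only [div_eq_inv_mul, rpow_mul ha.le] using convexOn_rpow_left (rpow_pos_of_pos ha c⁻¹)

theorem volume_setOf_mul_logb_lt {a c : ℝ} (ha : 1 < a) (hc : 0 < c) (A : ℝ) :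
    volume {y : ℝ | 0 < y ∧ c * logb a (1 + y) < A} = ENNReal.ofReal (a ^ (A / c) - 1) := by
  have : {y : ℝ | 0 < y ∧ c * logb a (1 + y) < A} = Ioo 0 (a ^ (A / c) - 1) := by
    ext y
    simp only [mem_ofPred_eq, mem_Ioo, and_congr_right_iff]
    intro hy
    rw [mul_comm, ← lt_div_iff₀ hc, logb_lt_iff_lt_rpow ha (by linarith), lt_sub_iff_add_lt,
      add_comm]
  rw [this, Real.volume_Ioo, sub_zero]

theorem measure_pi_eq_lintegral_insertNth {n : ℕ} {α : Fin (n + 1) → Type*}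
    [∀ i, MeasurableSpace (α i)] (μ : ∀ i, Measure (α i)) [∀ i, SigmaFinite (μ i)]
    (p : Fin (n + 1)) {S : Set (∀ i, α i)} (hS : MeasurableSet S) :
    Measure.pi μ S =
      ∫⁻ v, μ p {y | p.insertNth y v ∈ S} ∂Measure.pi fun j => μ (p.succAbove j) := by
  rw [← (measurePreserving_piFinSuccAbove μ p).symm.measure_preimage hS.nullMeasurableSet,
    Measure.prod_apply_symm (MeasurableEquiv.measurable _ hS)]
  rfl

theorem measurable_measure_insertNth {n : ℕ} {α : Fin (n + 1) → Type*}
    [∀ i, MeasurableSpace (α i)] (p : Fin (n + 1)) (μ : Measure (α p)) [SFinite μ]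
    {S : Set (∀ i, α i)} (hS : MeasurableSet S) :
    Measurable fun v : ∀ j, α (p.succAbove j) => μ {y | p.insertNth y v ∈ S} :=
  measurable_measure_prodMk_right ((MeasurableEquiv.piFinSuccAbove α p).symm.measurable hS)

theorem ConvexOn.toReal_lintegral_ofReal {α E : Type*} [MeasurableSpace α] {μ : Measure α}
    [AddCommMonoid E] [Module ℝ E] {s : Set E} {g : E → α → ℝ} (hs : Convex ℝ s)
    (hg : ∀ v, ConvexOn ℝ s fun t => g t v)
    (hmeas : ∀ t ∈ s, Measurable fun v => ENNReal.ofReal (g t v))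
    (hfin : ∀ t ∈ s, ∫⁻ v, ENNReal.ofReal (g t v) ∂μ ≠ ⊤) :
    ConvexOn ℝ s fun t => (∫⁻ v, ENNReal.ofReal (g t v) ∂μ).toReal := by
  refine ⟨hs, fun p hp q hq a c ha hc hac => ?_⟩
  have hpoint : ∀ v, ENNReal.ofReal (g (a • p + c • q) v)
      ≤ ENNReal.ofReal a * ENNReal.ofReal (g p v) + ENNReal.ofReal c * ENNReal.ofReal (g q v) :=
    fun v => by
      rw [← ENNReal.ofReal_mul ha, ← ENNReal.ofReal_mul hc]
      exact (ENNReal.ofReal_le_ofReal ((hg v).2 hp hq ha hc hac)).trans ENNReal.ofReal_add_le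
  have hint : ∫⁻ v, ENNReal.ofReal (g (a • p + c • q) v) ∂μ
      ≤ ENNReal.ofReal a * ∫⁻ v, ENNReal.ofReal (g p v) ∂μ
        + ENNReal.ofReal c * ∫⁻ v, ENNReal.ofReal (g q v) ∂μ := by
    rw [← lintegral_const_mul _ (hmeas p hp), ← lintegral_const_mul _ (hmeas q hq),
      ← lintegral_add_left ((hmeas p hp).const_mul _)]
    exact lintegral_mono hpoint
  have hne : ∀ {w : ℝ} {t}, t ∈ s → ENNReal.ofReal w * ∫⁻ v, ENNReal.ofReal (g t v) ∂μ ≠ ⊤ :=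
    fun ht => ENNReal.mul_ne_top ENNReal.ofReal_ne_top (hfin _ ht)
  have := ENNReal.toReal_mono (ENNReal.add_ne_top.2 ⟨hne hp, hne hq⟩) hint
  rwa [ENNReal.toReal_add (hne hp) (hne hq), ENNReal.toReal_mul, ENNReal.toReal_mul,
    ENNReal.toReal_ofReal ha, ENNReal.toReal_ofReal hc] at this

section Slice

variable {K : ℕ} (N b : Fin K → ℝ) (r : Fin K)

noncomputable def slack (x : Fin K → ℝ) (k : Fin K) : ℝ :=
  ∑ l ∈ Finset.Iic k, (b l - N l * logb 2 (1 + x l))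

theorem mem_outRegion_iff_slack {x : Fin K → ℝ} :
    x ∈ outRegion N b ↔ (∀ i, 0 < x i) ∧ ∀ k, 0 < slack N b x k := by
  simp only [outRegion, slack, Finset.sum_sub_distrib, sub_pos]
  rfl

theorem slack_update (x : Fin K → ℝ) (k : Fin K) (t y : ℝ) :
    slack N (update b r t) (update x r y) k = slack N b x k +
      if r ≤ k then (t - N r * logb 2 (1 + y)) - (b r - N r * logb 2 (1 + x r)) else 0 := by
  have : (fun l => update b r t l - N l * logb 2 (1 + update x r y l))
      = update (fun l => b l - N l * logb 2 (1 + x l)) r (t - N r * logb 2 (1 + y)) := by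
    ext l
    rcases eq_or_ne l r with rfl | hl <;> simp [*]
  simp only [slack, this, Finset.sum_update, Finset.mem_Iic]

def sliceBase (x : Fin K → ℝ) : Prop :=
  (∀ i ≠ r, 0 < x i) ∧ ∀ k < r, 0 < slack N b x k

-- Removing the `r`-th summand makes this independent of `x r` and `b r`.
noncomputable def sliceBound (x : Fin K → ℝ) : ℝ :=
  (Finset.Ici r).inf' Finset.nonempty_Ici (slack N b x) - (b r - N r * logb 2 (1 + x r))

theorem update_mem_outRegion_iff (x : Fin K → ℝ) (t y : ℝ) :
    update x r y ∈ outRegion N (update b r t) ↔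
      sliceBase N b r x ∧ 0 < y ∧ N r * logb 2 (1 + y) < t + sliceBound N b r x := by
  have hlt : ∀ k, k < r → (0 < slack N (update b r t) (update x r y) k ↔ 0 < slack N b x k) :=
    fun k hk => by rw [slack_update, if_neg hk.not_ge, add_zero]
  have hge : (∀ k, r ≤ k → 0 < slack N (update b r t) (update x r y) k) ↔
      N r * logb 2 (1 + y) < t + sliceBound N b r x := by
    rw [sliceBound, ← sub_lt_iff_lt_add', lt_sub_iff_add_lt, Finset.lt_inf'_iff]
    refine forall_congr' fun k => ?_
    rw [Finset.mem_Ici]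
    exact imp_congr_right fun hk => by
      rw [slack_update, if_pos hk]; constructor <;> intro <;> linarith
  have hsplit : (∀ k, 0 < slack N (update b r t) (update x r y) k) ↔
      (∀ k < r, 0 < slack N b x k) ∧ N r * logb 2 (1 + y) < t + sliceBound N b r x := by
    rw [← hge, ← forall₂_congr hlt]
    exact ⟨fun h => ⟨fun k _ => h k, fun k _ => h k⟩,
      fun h k => (lt_or_ge k r).elim (h.1 k) (h.2 k)⟩
  rw [mem_outRegion_iff_slack, forall_update_iff x (fun _ z => 0 < z), hsplit, sliceBase]
  tauto

open scoped Classical in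
noncomputable def sliceLength (x : Fin K → ℝ) (t : ℝ) : ℝ :=
  if sliceBase N b r x then 2 ^ ((t + sliceBound N b r x) / N r) - 1 else 0

theorem volume_slice_outRegion (hr : 0 < N r) (x : Fin K → ℝ) (t : ℝ) :
    volume {y | update x r y ∈ outRegion N (update b r t)} =
      ENNReal.ofReal (sliceLength N b r x t) := by
  simp only [update_mem_outRegion_iff, sliceLength]
  split_ifs with h
  · simp only [h, true_and, volume_setOf_mul_logb_lt one_lt_two hr]
  · simp [h]

theorem convexOn_sliceLength (x : Fin K → ℝ) :
    ConvexOn ℝ univ (sliceLength N b r x) := by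
  unfold sliceLength
  split_ifs
  · exact (((convexOn_rpow_left_div two_pos (N r)).translate_left (sliceBound N b r x)).add_const
      (-1)).congr fun t _ => by simp [sub_eq_add_neg]
  · exact convexOn_const 0 convex_univ

end Slice

section Outage

variable {K : ℕ} (N b : Fin K → ℝ)

theorem measurableSet_outRegion : MeasurableSet (outRegion N b) := by
  unfold outRegion
  simp only [ofPred_and, ofPred_forall]
  refine .inter (.iInter fun i => measurableSet_lt measurable_const (measurable_pi_apply i))
    (.iInter fun k => measurableSet_lt ?_ measurable_const)
  unfold logb
  fun_prop

theorem outRegion_subset_pi (hN : ∀ i, 0 < N i) :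
    outRegion N b ⊆
      univ.pi fun i => {y | 0 < y ∧ N i * logb 2 (1 + y) < ∑ l ∈ Finset.Iic i, b l} :=
  fun x ⟨hpos, hlt⟩ i _ => ⟨hpos i, (Finset.single_le_sum (f := fun l => N l * logb 2 (1 + x l))
    (fun l _ => mul_nonneg (hN l).le (logb_nonneg one_lt_two (by linarith [hpos l])))
    (Finset.mem_Iic.2 le_rfl)).trans_lt (hlt i)⟩

theorem volume_outRegion_ne_top (hN : ∀ i, 0 < N i) : volume (outRegion N b) ≠ ⊤ := by
  refine ne_top_of_le_ne_top ?_ (measure_mono (outRegion_subset_pi N b hN))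
  rw [volume_pi_pi]
  exact (ENNReal.prod_lt_top fun i _ => by
    rw [volume_setOf_mul_logb_lt one_lt_two (hN i)]; exact ENNReal.ofReal_lt_top).ne

theorem outRegion_mono {b b' : Fin K → ℝ} (h : b ≤ b') : outRegion N b ⊆ outRegion N b' :=
  fun _ ⟨hpos, hlt⟩ => ⟨hpos, fun k => (hlt k).trans_le (Finset.sum_le_sum fun l _ => h l)⟩

theorem monotone_fK_update (hN : ∀ i, 0 < N i) (r : Fin K) :
    Monotone fun t => fK N (update b r t) := fun _ _ hst =>
  ENNReal.toReal_mono (volume_outRegion_ne_top N _ hN)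
    (measure_mono (outRegion_mono N (update_mono hst)))

theorem convexOn_fK_update (hN : ∀ i, 0 < N i) (r : Fin K) :
    ConvexOn ℝ univ fun t => fK N (update b r t) := by
  obtain ⟨n, rfl⟩ := Nat.exists_eq_add_one.2 r.pos
  have hslice : ∀ t v, volume {y | r.insertNth y v ∈ outRegion N (update b r t)}
      = ENNReal.ofReal (sliceLength N b r (r.insertNth 0 v) t) := fun t v => by
    simp only [← volume_slice_outRegion N b r (hN r), Fin.update_insertNth]
  have hvol : ∀ t, volume (outRegion N (update b r t))
      = ∫⁻ v, ENNReal.ofReal (sliceLength N b r (r.insertNth 0 v) t) := fun t => by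
    rw [volume_pi, measure_pi_eq_lintegral_insertNth _ r (measurableSet_outRegion _ _)]
    simp only [hslice]
    rfl
  simp only [fK, hvol]
  refine ConvexOn.toReal_lintegral_ofReal convex_univ (fun v => convexOn_sliceLength N b r _)
    (fun t _ => ?_) (fun t _ => hvol t ▸ volume_outRegion_ne_top N _ hN)
  simpa only [hslice] using
    measurable_measure_insertNth r volume (measurableSet_outRegion N (update b r t))

theorem fK_finite_monotone_convex_general
    (K : ℕ) (N : Fin K → ℝ) (hN : ∀ i, 0 < N i)
    (r : Fin K) (b : Fin K → ℝ) :
    (∀ t ∈ Set.Ioi (0 : ℝ), volume (outRegion N (Function.update b r t)) ≠ ⊤) ∧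
    MonotoneOn (fun t : ℝ => fK N (Function.update b r t)) (Set.Ioi 0) ∧
    ConvexOn ℝ (Set.Ioi 0) (fun t : ℝ => fK N (Function.update b r t)) :=
  ⟨fun _ _ => volume_outRegion_ne_top N _ hN, (monotone_fK_update N b hN r).monotoneOn _,
    (convexOn_fK_update N b hN r).subset (subset_univ _) (convex_Ioi 0)⟩

/-- **Finiteness, monotonicity and convexity of the asymptotic outage volume in the
number of information bits of any single round** (Theorem 3): for each `r` and fixed
positive `b_j` (`j ≠ r`), the map `b_r ↦ f_K(b₁,…,b_K)` is finite, nondecreasing and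
convex on `(0,∞)`. -/
theorem fK_finite_monotone_convex
    (K : ℕ) (hK : 1 ≤ K) (N : Fin K → ℝ) (hN : ∀ i, 0 < N i)
    (r : Fin K) (b : Fin K → ℝ) (hb : ∀ i, i ≠ r → 0 < b i) :
    (∀ t ∈ Set.Ioi (0 : ℝ), volume (outRegion N (Function.update b r t)) ≠ ⊤) ∧
    MonotoneOn (fun t : ℝ => fK N (Function.update b r t)) (Set.Ioi 0) ∧
    ConvexOn ℝ (Set.Ioi 0) (fun t : ℝ => fK N (Function.update b r t)) :=
  fK_finite_monotone_convex_general K N hN r b
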